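/- Define β by β_{w(i)} := α_{w(i)} − (k+1)n for 1 ≤ i ≤ t, β_{w(i)} := α_{w(i)} − kn for t < i ≤ m, β_{w(i)} := α_{w(i)} + n for m+1 ≤ i ≤ m+T, and β_{w(i)} := α_{w(i)} for i > m+T. Then the ranks of β satisfy: r(β,w(m+i)) = i for 1 ≤ i ≤ T; r(β,w(t+i)) = mk + t + i for 1 ≤ i ≤ m − t; r(β,w(i)) = m(k+1) + i for 1 ≤ i ≤ t; and r(β,w(i)) = i for m+T < i ≤ N. -/

import Mathlib

/-!
Compare indices through `α̃_i = α_i - i/(N+1)`: on `1, …, N` the rank `r(α, i)` is the position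
of `α̃_i` in decreasing order, so `i ↦ α̃_{w i}` is strictly decreasing, and likewise for `β`.
All shifts defining `β` are integers, so `β̃_{w i}` is `α̃_{w i}` shifted by the same amount.
Listed in the claimed order, `β̃` runs through `α̃_{w(m+i)} + n` for `i ≤ T`, then
`ξ_{T+1}, …, ξ_{T+m}`, then `α̃_{w i}` for `i > m + T`. This list is strictly decreasing: `ξ` is,
because `m` counts exactly the `i` with `α̃_{w 1} - n < α̃_{w i}`, and the two junctions are the
crossing inequalities that define `T`. A strictly decreasing enumeration of `1, …, N` by `β̃` is
the rank order of `β`.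

All these indices are at most `N` because `N = ℓ(α) + |α|`: if `m + T > N`, the crossing
inequalities give `α_{w j} > q` whenever `m q + j ≤ N + 1 - m`, so `|α| ≥ N + 1 - m`,
while `ℓ(α) ≥ m`.
-/

/-- The rank function `r(α,i)` for a composition indexed by `1,…,N`. -/
def rnk (N : ℕ) (α : ℕ → ℕ) (i : ℕ) : ℕ :=
  ((Finset.Icc 1 N).filter fun j => α i < α j).card +
  ((Finset.Icc 1 i).filter fun j => α j = α i).card

/-- The length `ℓ(α)`: largest index with a nonzero part. -/
def len (N : ℕ) (α : ℕ → ℕ) : ℕ :=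
  ((Finset.Icc 1 N).filter fun j => α j ≠ 0).sup id

/-- The weight `|α| = Σ α_i`. -/
def wt (N : ℕ) (α : ℕ → ℕ) : ℕ := ∑ i ∈ Finset.Icc 1 N, α i

/-- The deformation `α̃_i = α_i - i·υ` with `υ = 1/(N+1)`. -/
def tilde (N : ℕ) (α : ℕ → ℕ) (i : ℕ) : ℚ := (α i : ℚ) - (i : ℚ) / ((N : ℚ) + 1)

/-- The leg-length `L(α;i,j)`. -/
def leg (N : ℕ) (α : ℕ → ℕ) (i j : ℕ) : ℕ :=
  ((Finset.Icc 1 N).filter fun l => i < l ∧ j ≤ α l ∧ α l ≤ α i).card +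
  ((Finset.Icc 1 N).filter fun l => l < i ∧ j ≤ α l + 1 ∧ α l + 1 ≤ α i).card

/-- The decreasing rearrangement `α⁺`: `α⁺_i = α_{w(i)}` where `w` inverts the rank. -/
def part (N : ℕ) (α : ℕ → ℕ) (i : ℕ) : ℕ :=
  ∑ j ∈ (Finset.Icc 1 N).filter (fun j => rnk N α j = i), α j

/-- Strict dominance order `α ≻ β`. -/
def sdom (N : ℕ) (α β : ℕ → ℕ) : Prop :=
  (∃ i ∈ Finset.Icc 1 N, α i ≠ β i) ∧
  ∀ k, k ≤ N → ∑ j ∈ Finset.Icc 1 k, β j ≤ ∑ j ∈ Finset.Icc 1 k, α j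

/-- The order `α ▷ β`. -/
def tri (N : ℕ) (α β : ℕ → ℕ) : Prop :=
  wt N α = wt N β ∧
  (sdom N (part N α) (part N β) ∨
    ((∀ i ∈ Finset.Icc 1 N, part N α i = part N β i) ∧ sdom N α β))

/-- `(α,β)` is a `(-n/m)`-critical pair. -/
def critical (N m n : ℕ) (α β : ℕ → ℕ) : Prop :=
  tri N α β ∧ ∀ i ∈ Finset.Icc 1 N,
    ((rnk N β i : ℤ) - (rnk N α i : ℤ)) * (n : ℤ) = (m : ℤ) * ((α i : ℤ) - (β i : ℤ))

open Finset

theorem tilde_lt_tilde_add_iff {N a b : ℕ} (α : ℕ → ℕ) (c : ℤ) (ha : a ∈ Icc 1 N)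
    (hb : b ∈ Icc 1 N) :
    tilde N α a < tilde N α b + c ↔ (α a : ℤ) < α b + c ∨ ((α a : ℤ) = α b + c ∧ b < a) := by
  simp only [mem_Icc] at ha hb
  have hN : (0 : ℚ) < N + 1 := by positivity
  set x : ℚ := ((a : ℚ) - b) / (N + 1)
  have hx : -1 < x ∧ x < 1 := by
    have : (a : ℚ) ≤ N ∧ (b : ℚ) ≤ N ∧ (1 : ℚ) ≤ a ∧ (1 : ℚ) ≤ b := by
      refine ⟨?_, ?_, ?_, ?_⟩ <;> exact_mod_cast (by omega)
    constructor
    · rw [lt_div_iff₀ hN]; linarith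
    · rw [div_lt_iff₀ hN]; linarith
  have hx0 : 0 < x ↔ b < a := by
    rw [div_pos_iff_of_pos_right hN, sub_pos, Nat.cast_lt]
  set d : ℤ := α a - α b - c
  have hd : tilde N α a < tilde N α b + c ↔ (d : ℚ) < x := by
    simp only [tilde, d, x, sub_div]
    push_cast
    constructor <;> intro h <;> linarith
  rw [hd]
  rcases lt_trichotomy d 0 with h | h | h
  · have : (d : ℚ) ≤ -1 := by exact_mod_cast (by omega : d ≤ -1)
    exact iff_of_true (by linarith) (Or.inl (by omega))
  · rw [h, Int.cast_zero, hx0]; omega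
  · have : (1 : ℚ) ≤ d := by exact_mod_cast (by omega : 1 ≤ d)
    exact iff_of_false (by linarith) (by omega)

theorem tilde_lt_tilde_iff {N a b : ℕ} (α : ℕ → ℕ) (ha : a ∈ Icc 1 N) (hb : b ∈ Icc 1 N) :
    tilde N α a < tilde N α b ↔ α a < α b ∨ (α a = α b ∧ b < a) := by
  simpa using tilde_lt_tilde_add_iff α 0 ha hb

theorem tilde_le_self (N : ℕ) (α : ℕ → ℕ) (x : ℕ) : tilde N α x ≤ α x := by
  have : (0 : ℚ) ≤ x / (N + 1) := by positivity
  unfold tilde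
  linarith

theorem neg_one_lt_tilde {N x : ℕ} (α : ℕ → ℕ) (hx : x ≤ N) : -1 < tilde N α x := by
  have hN : (0 : ℚ) < N + 1 := by positivity
  have hxN : (x : ℚ) ≤ N := by exact_mod_cast hx
  have : (x : ℚ) / (N + 1) < 1 := by rw [div_lt_iff₀ hN]; linarith
  have : (0 : ℚ) ≤ α x := by positivity
  unfold tilde
  linarith

theorem rnk_eq_card_tilde_le {N j : ℕ} (α : ℕ → ℕ) (hj : j ∈ Icc 1 N) :
    rnk N α j = #{i ∈ Icc 1 N | tilde N α j ≤ tilde N α i} := by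
  have hsplit : {i ∈ Icc 1 N | tilde N α j ≤ tilde N α i} =
      {i ∈ Icc 1 N | α j < α i} ∪ {i ∈ Icc 1 j | α i = α j} := by
    ext i
    by_cases hi : i ∈ Icc 1 N
    · simp only [mem_union, mem_filter, ← not_lt, tilde_lt_tilde_iff α hi hj]
      simp only [mem_Icc] at hi hj ⊢
      omega
    · simp only [mem_union, mem_filter, mem_Icc] at hi hj ⊢
      omega
  rw [hsplit, card_union_of_disjoint]
  · rfl
  · exact disjoint_left.2 fun i h1 h2 => by
      simp only [mem_filter] at h1 h2; omega

theorem one_le_rnk (N : ℕ) (α : ℕ → ℕ) {j : ℕ} (hj : 1 ≤ j) : 1 ≤ rnk N α j := by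
  have : j ∈ {i ∈ Icc 1 j | α i = α j} := by simp [hj]
  have := card_pos.2 ⟨j, this⟩
  unfold rnk; omega

theorem rnk_le {N j : ℕ} (α : ℕ → ℕ) (hj : j ∈ Icc 1 N) : rnk N α j ≤ N := by
  rw [rnk_eq_card_tilde_le α hj]
  exact (card_filter_le _ _).trans (by simp)

theorem rnk_le_rnk_of_tilde_le {N a b : ℕ} (α : ℕ → ℕ) (ha : a ∈ Icc 1 N) (hb : b ∈ Icc 1 N)
    (h : tilde N α a ≤ tilde N α b) : rnk N α b ≤ rnk N α a := by
  rw [rnk_eq_card_tilde_le α ha, rnk_eq_card_tilde_le α hb]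
  exact card_le_card fun i hi => by
    simp only [mem_filter] at hi ⊢; exact ⟨hi.1, h.trans hi.2⟩

theorem rnk_lt_rnk_of_tilde_lt {N a b : ℕ} (α : ℕ → ℕ) (ha : a ∈ Icc 1 N) (hb : b ∈ Icc 1 N)
    (h : tilde N α b < tilde N α a) : rnk N α a < rnk N α b := by
  rw [rnk_eq_card_tilde_le α ha, rnk_eq_card_tilde_le α hb]
  refine card_lt_card ((ssubset_iff_of_subset fun i hi => ?_).2 ⟨b, ?_, ?_⟩)
  · simp only [mem_filter] at hi ⊢; exact ⟨hi.1, h.le.trans hi.2⟩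
  · simp [hb]
  · simp [h]

theorem tilde_lt_tilde_of_rnk_lt {N a b : ℕ} (α : ℕ → ℕ) (ha : a ∈ Icc 1 N) (hb : b ∈ Icc 1 N)
    (h : rnk N α a < rnk N α b) : tilde N α b < tilde N α a :=
  lt_of_not_ge fun hle => (rnk_le_rnk_of_tilde_le α ha hb hle).not_gt h

theorem le_rnk_of_lt {N x : ℕ} (α : ℕ → ℕ) (hsupp : ∀ i, N < i → α i = 0) (hx : N < x) :
    x ≤ rnk N α x := by
  have hx0 := hsupp x hx
  calc x = #(Icc 1 x) := by simp
    _ ≤ #({j ∈ Icc 1 N | α x < α j} ∪ {j ∈ Icc 1 x | α j = α x}) := card_le_card fun j hj => by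
        have := hsupp j
        simp only [mem_union, mem_filter, mem_Icc] at hj ⊢
        omega
    _ ≤ rnk N α x := card_union_le _ _

theorem eq_self_of_lt_succ {N : ℕ} {f : ℕ → ℕ} (h1 : 1 ≤ f 1) (hN : f N ≤ N)
    (hf : ∀ ρ, 1 ≤ ρ → ρ < N → f ρ < f (ρ + 1)) {ρ : ℕ} (hρ : ρ ∈ Icc 1 N) : f ρ = ρ := by
  have grow : ∀ d ρ, 1 ≤ ρ → ρ + d ≤ N → f ρ + d ≤ f (ρ + d) := by
    intro d
    induction d with
    | zero => simp
    | succ d ih =>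
      intro ρ h1 h2
      have := ih ρ h1 (by omega)
      have := hf (ρ + d) (by omega) (by omega)
      show f ρ + (d + 1) ≤ f (ρ + d + 1)
      omega
  rw [mem_Icc] at hρ
  have lower := grow (ρ - 1) 1 le_rfl (by omega)
  have upper := grow (N - ρ) ρ hρ.1 (by omega)
  rw [Nat.add_sub_of_le hρ.1] at lower
  rw [Nat.add_sub_of_le hρ.2] at upper
  omega

theorem rnk_eq_of_tilde_lt_succ {N : ℕ} (α W : ℕ → ℕ) (hW : ∀ ρ ∈ Icc 1 N, W ρ ∈ Icc 1 N)
    (h : ∀ ρ, 1 ≤ ρ → ρ < N → tilde N α (W (ρ + 1)) < tilde N α (W ρ)) {ρ : ℕ}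
    (hρ : ρ ∈ Icc 1 N) : rnk N α (W ρ) = ρ := by
  have hN : 1 ≤ N := (mem_Icc.1 hρ).1.trans (mem_Icc.1 hρ).2
  refine eq_self_of_lt_succ (f := fun ρ => rnk N α (W ρ)) ?_ ?_ ?_ hρ
  · exact one_le_rnk N α (mem_Icc.1 (hW 1 (by simp [hN]))).1
  · exact rnk_le α (hW N (by simp [hN]))
  · intro ρ h1 h2
    exact rnk_lt_rnk_of_tilde_lt α (hW ρ (by simp only [mem_Icc]; omega))
      (hW (ρ + 1) (by simp only [mem_Icc]; omega)) (h ρ h1 h2)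

theorem mem_Icc_of_rnk_le {N x : ℕ} (α : ℕ → ℕ) (hsupp : ∀ i, N < i → α i = 0) (hx : 1 ≤ x)
    (h : rnk N α x ≤ N) : x ∈ Icc 1 N :=
  mem_Icc.2 ⟨hx, not_lt.1 fun hlt => by have := le_rnk_of_lt α hsupp hlt; omega⟩

theorem rnk_le_card_tilde_lt_iff {N l : ℕ} (α : ℕ → ℕ) (c : ℚ) (hl : l ∈ Icc 1 N) :
    rnk N α l ≤ #{i ∈ Icc 1 N | c < tilde N α i} ↔ c < tilde N α l := by
  rw [rnk_eq_card_tilde_le α hl]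
  constructor
  · intro h
    by_contra hle
    have hsub : insert l {i ∈ Icc 1 N | c < tilde N α i} ⊆
        {i ∈ Icc 1 N | tilde N α l ≤ tilde N α i} := by
      intro i hi
      rw [mem_insert, mem_filter] at hi
      rcases hi with rfl | ⟨hi, hci⟩
      · simp [hl]
      · simp only [mem_filter]; exact ⟨hi, (not_lt.1 hle).trans hci.le⟩
    have := card_le_card hsub
    rw [card_insert_of_notMem (by simp [hle])] at this
    omega
  · intro h
    exact card_le_card fun i hi => by
      simp only [mem_filter] at hi ⊢; exact ⟨hi.1, h.trans_le hi.2⟩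

theorem card_tilde_sub_lt_eq_leg {N a n : ℕ} (α : ℕ → ℕ) (ha : a ∈ Icc 1 N)
    (hrank : rnk N α a = 1) (hn1 : 1 ≤ n) (hn2 : n ≤ α a) :
    #{l ∈ Icc 1 N | tilde N α a - n < tilde N α l} = leg N α a (α a + 1 - n) + 1 := by
  have hmax : ∀ l ∈ Icc 1 N, ¬ (α a < α l ∨ (α a = α l ∧ l < a)) := fun l hl h => by
    have := rnk_lt_rnk_of_tilde_lt α hl ha ((tilde_lt_tilde_iff α ha hl).2 h)
    have := one_le_rnk N α (mem_Icc.1 hl).1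
    omega
  have hsplit : {l ∈ Icc 1 N | tilde N α a - n < tilde N α l} =
      ({l ∈ Icc 1 N | a < l ∧ α a + 1 - n ≤ α l ∧ α l ≤ α a} ∪
        {l ∈ Icc 1 N | l < a ∧ α a + 1 - n ≤ α l + 1 ∧ α l + 1 ≤ α a}) ∪ {a} := by
    ext l
    by_cases hl : l ∈ Icc 1 N
    · have hlt := tilde_lt_tilde_add_iff α n ha hl
      have := hmax l hl
      push_cast at hlt
      simp only [mem_union, mem_filter, mem_singleton, sub_lt_iff_lt_add, hlt, hl, true_and]
      rcases eq_or_ne l a with rfl | hla <;> omega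
    · simp only [mem_union, mem_filter, mem_singleton]
      exact iff_of_false (by tauto) (by rintro ((h | h) | rfl) <;> tauto)
  rw [hsplit, card_union_of_disjoint, card_union_of_disjoint, card_singleton]
  · rfl
  · exact disjoint_filter.2 fun _ _ h1 h2 => by omega
  · exact disjoint_singleton_right.2 (by simp)

theorem le_len {N l : ℕ} (α : ℕ → ℕ) (hl : l ∈ Icc 1 N) (h : α l ≠ 0) : l ≤ len N α :=
  le_sup (f := id) (mem_filter.2 ⟨hl, h⟩)

theorem card_tilde_sub_lt_le_len {N a n : ℕ} (α : ℕ → ℕ) (ha : a ∈ Icc 1 N) (hn1 : 1 ≤ n)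
    (hn2 : n ≤ α a) : #{l ∈ Icc 1 N | tilde N α a - n < tilde N α l} ≤ len N α := by
  calc _ ≤ #(Icc 1 (len N α)) := card_le_card fun l hl => ?_
    _ = len N α := by simp
  obtain ⟨hl, hlt⟩ := mem_filter.1 hl
  have := (tilde_lt_tilde_add_iff α n ha hl).1 (by push_cast; linarith)
  have := le_len α ha (by omega)
  by_cases h0 : α l = 0
  · simp only [mem_Icc] at hl ⊢; omega
  · simp only [mem_Icc] at hl ⊢; exact ⟨hl.1, le_len α (mem_Icc.2 hl) h0⟩

theorem exists_eq_mul_add_of_pos {m p : ℕ} (hm : 0 < m) (hp : 1 ≤ p) :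
    ∃ q i, 1 ≤ i ∧ i ≤ m ∧ p = m * q + i :=
  ⟨(p - 1) / m, (p - 1) % m + 1, by omega, Nat.mod_lt _ hm,
    by have := Nat.div_add_mod (p - 1) m; omega⟩

theorem eq_mul_add_of_eq_mod {T m t k : ℕ} (hm : 0 < m) (hT : 1 ≤ T)
    (ht : t = (T - 1) % m + 1) (hk : k = (T - t) / m) : T = m * k + t ∧ 1 ≤ t ∧ t ≤ m := by
  have := Nat.div_add_mod (T - 1) m
  have := Nat.mod_lt (T - 1) hm
  subst ht hk
  rw [show T - ((T - 1) % m + 1) = m * ((T - 1) / m) by omega, Nat.mul_div_cancel_left _ hm]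
  omega

section Xi

variable {m : ℕ} {n : ℚ} {f ξ : ℕ → ℚ}

theorem xi_add_period (hm : 0 < m) (hξ : ∀ k i, 1 ≤ i → i ≤ m → ξ (m * k + i) = f i - n * k)
    {p : ℕ} (hp : 1 ≤ p) : ξ (p + m) = ξ p - n := by
  obtain ⟨q, i, hi, him, rfl⟩ := exists_eq_mul_add_of_pos hm hp
  rw [show m * q + i + m = m * (q + 1) + i by ring, hξ _ _ hi him, hξ _ _ hi him]
  push_cast
  ring

theorem xi_succ_lt (hm : 0 < m) (hξ : ∀ k i, 1 ≤ i → i ≤ m → ξ (m * k + i) = f i - n * k)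
    (hf : ∀ i, 1 ≤ i → i < m → f (i + 1) < f i) (hwrap : f 1 - n < f m) {p : ℕ} (hp : 1 ≤ p) :
    ξ (p + 1) < ξ p := by
  obtain ⟨q, i, hi, him, rfl⟩ := exists_eq_mul_add_of_pos hm hp
  rcases him.lt_or_eq with him | rfl
  · rw [Nat.add_assoc, hξ _ _ (by omega) him, hξ _ _ hi him.le]
    linarith [hf i hi him]
  · rw [show i * q + i + 1 = i * (q + 1) + 1 by ring, hξ _ _ le_rfl hi, hξ _ _ hi le_rfl]
    push_cast
    linarith

end Xi

theorem le_wt_of_lt_parts {N M m : ℕ} (α w : ℕ → ℕ) (hm : 0 < m)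
    (hinj : ∀ i j, i ∈ Icc 1 m → j ∈ Icc 1 m → w i = w j → i = j)
    (hw : ∀ j ∈ Icc 1 m, w j ∈ Icc 1 N) (h : ∀ q j, j ∈ Icc 1 m → m * q + j ≤ M → q < α (w j)) :
    M ≤ wt N α := by
  have hres : ∀ p, (p - 1) % m + 1 ∈ Icc 1 m := fun p => by
    have := Nat.mod_lt (p - 1) hm; simp only [mem_Icc]; omega
  have hdiv := fun p => Nat.div_add_mod (p - 1) m
  -- `p = m * q + j` goes to the cell `(w j, q)` of the diagram of `α`
  calc M = #(Icc 1 M) := by simp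
    _ ≤ #((Icc 1 N).sigma fun l => range (α l)) := by
      refine card_le_card_of_injOn (fun p => ⟨w ((p - 1) % m + 1), (p - 1) / m⟩) ?_ ?_
      · intro p hp
        simp only [coe_Icc, Set.mem_Icc, mem_coe, mem_sigma, mem_range] at hp ⊢
        exact ⟨hw _ (hres p), h _ _ (hres p) (by have := hdiv p; omega)⟩
      · intro p hp p' hp' hpp'
        simp only [coe_Icc, Set.mem_Icc, Sigma.mk.injEq, heq_eq_eq] at hp hp' hpp'
        have hj := hinj _ _ (hres p) (hres p') hpp'.1
        have hq := hdiv p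
        rw [hpp'.2] at hq
        have := hdiv p'
        omega
    _ = wt N α := by simp [card_sigma, wt]

/-- The values of `β̃` along the claimed rank order of `β`. -/
def mergedSeq (f ξ : ℕ → ℚ) (n : ℚ) (m T ρ : ℕ) : ℚ :=
  if ρ ≤ T then f (m + ρ) + n else if ρ ≤ m + T then ξ ρ else f ρ

theorem mergedSeq_succ_lt {N m T : ℕ} {n : ℚ} {f ξ : ℕ → ℚ} (hm : 0 < m) (hT : 1 ≤ T)
    (hmT : m + T ≤ N) (hf : ∀ i, 1 ≤ i → i < N → f (i + 1) < f i) (hwrap : f 1 - n < f m)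
    (hsmall : m < N → f (m + 1) ≤ f 1 - n)
    (hξ : ∀ k i, 1 ≤ i → i ≤ m → ξ (m * k + i) = f i - n * k)
    (hT2 : ∀ s, 1 ≤ s → s < T → f (m + s) < ξ (m + s + 1)) (hT3 : ξ (m + T + 1) < f (m + T))
    {ρ : ℕ} (hρ : 1 ≤ ρ) (hρN : ρ < N) :
    mergedSeq f ξ n m T (ρ + 1) < mergedSeq f ξ n m T ρ := by
  have hξsucc : ∀ p, 1 ≤ p → ξ (p + 1) < ξ p := fun p =>
    xi_succ_lt hm hξ (fun i hi him => hf i hi (by omega)) hwrap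
  unfold mergedSeq
  split_ifs <;> try omega
  · rw [← Nat.add_assoc]
    linarith [hf (m + ρ) (by omega) (by omega)]
  · obtain rfl : ρ = T := by omega
    have := xi_add_period hm hξ (show 1 ≤ ρ + 1 by omega)
    rw [show ρ + 1 + m = m + ρ + 1 by ring] at this
    linarith
  · exact hξsucc ρ (by omega)
  · obtain rfl : ρ = m + T := by omega
    have hcross : f (m + T) ≤ ξ (m + T) := by
      rcases hT.lt_or_eq with hT | rfl
      · have h1 := hT2 (T - 1) (by omega) (by omega)
        have h2 := hf (m + (T - 1)) (by omega) (by omega)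
        rw [show m + (T - 1) + 1 = m + T by omega] at h1 h2
        exact (h2.trans h1).le
      · have := hξ 1 1 le_rfl hm
        rw [mul_one, Nat.cast_one, mul_one] at this
        linarith [hsmall (by omega)]
    linarith [hf (m + T) (by omega) hρN]
  · exact hf ρ hρ hρN

/-- The position in the α-order of the index that should get β-rank `ρ`, where `T = m * k + t`. -/
def betaOrder (m k t ρ : ℕ) : ℕ :=
  if ρ ≤ m * k + t then m + ρ
  else if ρ ≤ m * (k + 1) then ρ - m * k
  else if ρ ≤ m * (k + 1) + t then ρ - m * (k + 1)
  else ρ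

theorem betaOrder_mem_Icc {N m k t ρ : ℕ} (hmT : m + (m * k + t) ≤ N) (hρ : ρ ∈ Icc 1 N) :
    betaOrder m k t ρ ∈ Icc 1 N := by
  have : m * (k + 1) = m * k + m := by ring
  rw [mem_Icc] at hρ ⊢
  unfold betaOrder
  split_ifs <;> omega

theorem tilde_eq_tilde_add {N x : ℕ} {α β : ℕ → ℕ} (c : ℤ) (h : (β x : ℤ) = α x + c) :
    tilde N β x = tilde N α x + c := by
  have : (β x : ℚ) = α x + c := by exact_mod_cast h
  unfold tilde
  rw [this]
  ring

theorem tilde_betaOrder {N m k t n : ℕ} {α β w : ℕ → ℕ} {ξ : ℕ → ℚ} (ht : t ≤ m)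
    (hξ : ∀ k i, 1 ≤ i → i ≤ m → ξ (m * k + i) = tilde N α (w i) - (n : ℚ) * k)
    (hβ : ∀ i, 1 ≤ i →
      (i ≤ t → (β (w i) : ℤ) = (α (w i) : ℤ) - (k + 1) * n) ∧
      (t < i → i ≤ m → (β (w i) : ℤ) = (α (w i) : ℤ) - k * n) ∧
      (m < i → i ≤ m + (m * k + t) → β (w i) = α (w i) + n) ∧
      (m + (m * k + t) < i → β (w i) = α (w i)))
    {ρ : ℕ} (hρ : 1 ≤ ρ) :
    tilde N β (w (betaOrder m k t ρ)) =
      mergedSeq (fun i => tilde N α (w i)) ξ n m (m * k + t) ρ := by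
  have : m * (k + 1) = m * k + m := by ring
  unfold betaOrder mergedSeq
  split_ifs <;> try omega
  · have hb : (β (w (m + ρ)) : ℤ) = α (w (m + ρ)) + n := by
      rw [(hβ _ (by omega)).2.2.1 (by omega) (by omega)]; push_cast; rfl
    rw [tilde_eq_tilde_add _ hb, Int.cast_natCast]
  · obtain ⟨i, rfl⟩ : ∃ i, ρ = m * k + i := ⟨ρ - m * k, by omega⟩
    have hb : (β (w i) : ℤ) = α (w i) + -(k * n) := by
      rw [(hβ _ (by omega)).2.1 (by omega) (by omega)]; ring
    rw [Nat.add_sub_cancel_left, hξ _ _ (by omega) (by omega), tilde_eq_tilde_add _ hb]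
    push_cast
    ring
  · obtain ⟨i, rfl⟩ : ∃ i, ρ = m * (k + 1) + i := ⟨ρ - m * (k + 1), by omega⟩
    have hb : (β (w i) : ℤ) = α (w i) + -((k + 1) * n) := by
      rw [(hβ _ (by omega)).1 (by omega)]; ring
    rw [Nat.add_sub_cancel_left, hξ _ _ (by omega) (by omega), tilde_eq_tilde_add _ hb]
    push_cast
    ring
  · simp only [tilde, (hβ ρ hρ).2.2.2 (by omega)]

theorem betaOrder_of_le {m k t ρ : ℕ} (hρ : ρ ≤ m * k + t) : betaOrder m k t ρ = m + ρ :=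
  if_pos hρ

theorem betaOrder_add {m k t i : ℕ} (hi : 1 ≤ i) (him : i ≤ m - t) :
    betaOrder m k t (m * k + t + i) = t + i := by
  have : m * (k + 1) = m * k + m := by ring
  rw [betaOrder, if_neg (by omega), if_pos (by omega)]
  omega

theorem betaOrder_mul_succ_add {m k t i : ℕ} (htm : t ≤ m) (hi : 1 ≤ i) (hit : i ≤ t) :
    betaOrder m k t (m * (k + 1) + i) = i := by
  have : m * (k + 1) = m * k + m := by ring
  rw [betaOrder, if_neg (by omega), if_neg (by omega), if_pos (by omega), Nat.add_sub_cancel_left]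

theorem betaOrder_of_lt {m k t ρ : ℕ} (hρ : m + (m * k + t) < ρ) : betaOrder m k t ρ = ρ := by
  have : m * (k + 1) = m * k + m := by ring
  rw [betaOrder, if_neg (by omega), if_neg (by omega), if_neg (by omega)]

def IsRankOrder (N : ℕ) (α w : ℕ → ℕ) : Prop :=
  ∀ i, 1 ≤ i → 1 ≤ w i ∧ rnk N α (w i) = i

namespace IsRankOrder

variable {N : ℕ} {α w : ℕ → ℕ}

theorem injOn (hw : IsRankOrder N α w) {i j : ℕ} (hi : 1 ≤ i) (hj : 1 ≤ j) (h : w i = w j) :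
    i = j := by
  rw [← (hw i hi).2, ← (hw j hj).2, h]

theorem apply_mem_Icc (hw : IsRankOrder N α w) (hsupp : ∀ i, N < i → α i = 0) {i : ℕ}
    (hi : i ∈ Icc 1 N) : w i ∈ Icc 1 N := by
  obtain ⟨hwi, hrnk⟩ := hw i (mem_Icc.1 hi).1
  exact mem_Icc_of_rnk_le α hsupp hwi (by rw [hrnk]; exact (mem_Icc.1 hi).2)

theorem tilde_succ_lt (hw : IsRankOrder N α w) (hsupp : ∀ i, N < i → α i = 0) {i : ℕ}
    (hi : 1 ≤ i) (hiN : i < N) : tilde N α (w (i + 1)) < tilde N α (w i) :=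
  tilde_lt_tilde_of_rnk_lt α (hw.apply_mem_Icc hsupp (by simp only [mem_Icc]; omega))
    (hw.apply_mem_Icc hsupp (by simp only [mem_Icc]; omega))
    (by rw [(hw i hi).2, (hw (i + 1) (by omega)).2]; omega)

theorem le_iff_lt_tilde (hw : IsRankOrder N α w) (hsupp : ∀ i, N < i → α i = 0) {c : ℚ} {m : ℕ}
    (hcard : #{l ∈ Icc 1 N | c < tilde N α l} = m) {i : ℕ} (hi : i ∈ Icc 1 N) :
    i ≤ m ↔ c < tilde N α (w i) := by
  rw [← rnk_le_card_tilde_lt_iff α c (hw.apply_mem_Icc hsupp hi), hcard, (hw i (mem_Icc.1 hi).1).2]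

theorem add_le_of_tilde_lt_xi (hw : IsRankOrder N α w) (hsupp : ∀ i, N < i → α i = 0)
    {m n T : ℕ} {ξ : ℕ → ℚ} (hNfull : N = len N α + wt N α) (hlen : m ≤ len N α) (hm : 0 < m)
    (hn1 : 1 ≤ n) (hn2 : n ≤ α (w 1))
    (hξ : ∀ k i, 1 ≤ i → i ≤ m → ξ (m * k + i) = tilde N α (w i) - (n : ℚ) * k)
    (hT2 : ∀ s, 1 ≤ s → s < T → tilde N α (w (m + s)) < ξ (m + s + 1)) : m + T ≤ N := by
  by_contra hlt
  suffices N + 1 - m ≤ wt N α by omega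
  refine le_wt_of_lt_parts α w hm
    (fun i j hi hj => hw.injOn (mem_Icc.1 hi).1 (mem_Icc.1 hj).1)
    (fun j hj => hw.apply_mem_Icc hsupp (by simp only [mem_Icc] at hj ⊢; omega))
    fun q j hj hqj => ?_
  rw [mem_Icc] at hj
  rcases Nat.eq_zero_or_pos (m * q + j - 1) with h0 | hs
  · obtain rfl : q = 0 := by simpa [hm.ne'] using (show m * q = 0 by omega)
    obtain rfl : j = 1 := by omega
    omega
  have hstep := hT2 _ hs (by omega)
  rw [show m + (m * q + j - 1) + 1 = m * (q + 1) + j by rw [Nat.mul_succ]; omega,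
    hξ _ _ hj.1 hj.2] at hstep
  have hbelow := neg_one_lt_tilde α (mem_Icc.1 (hw.apply_mem_Icc hsupp
    (i := m + (m * q + j - 1)) (by simp only [mem_Icc]; omega))).2
  have habove := tilde_le_self N α (w j)
  have hnq : (q : ℚ) + 1 ≤ n * (q + 1) :=
    le_mul_of_one_le_left (by positivity) (by exact_mod_cast hn1)
  have : (q : ℚ) < α (w j) := by push_cast at hstep; linarith
  exact_mod_cast this

theorem rnk_betaOrder (hw : IsRankOrder N α w) (hsupp : ∀ i, N < i → α i = 0) {β : ℕ → ℕ}
    {m n k t : ℕ} {ξ : ℕ → ℚ} (hm : 0 < m) (ht1 : 1 ≤ t) (htm : t ≤ m)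
    (hmT : m + (m * k + t) ≤ N)
    (hcard : #{l ∈ Icc 1 N | tilde N α (w 1) - n < tilde N α l} = m)
    (hξ : ∀ k i, 1 ≤ i → i ≤ m → ξ (m * k + i) = tilde N α (w i) - (n : ℚ) * k)
    (hT2 : ∀ s, 1 ≤ s → s < m * k + t → tilde N α (w (m + s)) < ξ (m + s + 1))
    (hT3 : ξ (m + (m * k + t) + 1) < tilde N α (w (m + (m * k + t))))
    (hβ : ∀ i, 1 ≤ i →
      (i ≤ t → (β (w i) : ℤ) = (α (w i) : ℤ) - (k + 1) * n) ∧
      (t < i → i ≤ m → (β (w i) : ℤ) = (α (w i) : ℤ) - k * n) ∧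
      (m < i → i ≤ m + (m * k + t) → β (w i) = α (w i) + n) ∧
      (m + (m * k + t) < i → β (w i) = α (w i)))
    {ρ : ℕ} (hρ : ρ ∈ Icc 1 N) : rnk N β (w (betaOrder m k t ρ)) = ρ := by
  have hlarge := fun i => hw.le_iff_lt_tilde hsupp hcard (i := i)
  refine rnk_eq_of_tilde_lt_succ β (fun ρ => w (betaOrder m k t ρ))
    (fun ρ hρ => hw.apply_mem_Icc hsupp (betaOrder_mem_Icc hmT hρ)) (fun ρ h1 h2 => ?_) hρ
  rw [tilde_betaOrder htm hξ hβ h1, tilde_betaOrder htm hξ hβ (by omega)]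
  refine mergedSeq_succ_lt hm (by omega) hmT (fun i hi hiN => hw.tilde_succ_lt hsupp hi hiN)
    ((hlarge m (by simp only [mem_Icc]; omega)).1 le_rfl) (fun h => ?_) hξ hT2 hT3 h1 h2
  exact not_lt.1 fun h' => by have := (hlarge (m + 1) (by simp only [mem_Icc]; omega)).2 h'; omega

end IsRankOrder

theorem beta_ranks_general (N : ℕ) (α β : ℕ → ℕ) (w : ℕ → ℕ) (m n T t k : ℕ) (ξ : ℕ → ℚ)
    (hNfull : N = len N α + wt N α)
    (hsupp : ∀ i, N < i → α i = 0)
    (hw : ∀ i, 1 ≤ i → 1 ≤ w i ∧ rnk N α (w i) = i)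
    (hn1 : 1 ≤ n) (hn2 : n ≤ α (w 1))
    (hm : leg N α (w 1) (α (w 1) + 1 - n) + 1 = m)
    (hξ : ∀ k i, 1 ≤ i → i ≤ m → ξ (m * k + i) = tilde N α (w i) - (n : ℚ) * k)
    (hT1 : 1 ≤ T)
    (hT2 : ∀ s, 1 ≤ s → s < T → tilde N α (w (m + s)) < ξ (m + s + 1))
    (hT3 : ξ (m + T + 1) < tilde N α (w (m + T)))
    (ht : t = (T - 1) % m + 1) (hk : k = (T - t) / m)
    (hβ : ∀ i, 1 ≤ i →
      (i ≤ t → (β (w i) : ℤ) = (α (w i) : ℤ) - (k + 1) * n) ∧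
      (t < i → i ≤ m → (β (w i) : ℤ) = (α (w i) : ℤ) - k * n) ∧
      (m < i → i ≤ m + T → β (w i) = α (w i) + n) ∧
      (m + T < i → β (w i) = α (w i))) :
    (∀ i, 1 ≤ i → i ≤ T → rnk N β (w (m + i)) = i) ∧
    (∀ i, 1 ≤ i → i ≤ m - t → rnk N β (w (t + i)) = m * k + t + i) ∧
    (∀ i, 1 ≤ i → i ≤ t → rnk N β (w i) = m * (k + 1) + i) ∧
    (∀ i, m + T < i → i ≤ N → rnk N β (w i) = i) := by
  have hw : IsRankOrder N α w := hw
  have hm0 : 0 < m := by omega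
  obtain ⟨rfl, ht1, htm⟩ := eq_mul_add_of_eq_mod hm0 hT1 ht hk
  have hN : 1 ≤ N := by
    by_contra h
    have := hsupp (w 1) (by have := (hw 1 le_rfl).1; omega)
    omega
  have hw1 : w 1 ∈ Icc 1 N := hw.apply_mem_Icc hsupp (by simp [hN])
  have hcard : #{l ∈ Icc 1 N | tilde N α (w 1) - n < tilde N α l} = m := by
    rw [card_tilde_sub_lt_eq_leg α hw1 (hw 1 le_rfl).2 hn1 hn2, hm]
  have hmT := hw.add_le_of_tilde_lt_xi hsupp hNfull
    (hcard ▸ card_tilde_sub_lt_le_len α hw1 hn1 hn2) hm0 hn1 hn2 hξ hT2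
  have key := fun ρ => hw.rnk_betaOrder hsupp hm0 ht1 htm hmT hcard hξ hT2 hT3 hβ (ρ := ρ)
  refine ⟨fun i hi1 hi2 => ?_, fun i hi1 hi2 => ?_, fun i hi1 hi2 => ?_, fun i hi1 hi2 => ?_⟩
  · simpa only [betaOrder_of_le hi2] using key i (by simp only [mem_Icc]; omega)
  · simpa only [betaOrder_add hi1 hi2] using key (m * k + t + i) (by simp only [mem_Icc]; omega)
  · have : m * (k + 1) = m * k + m := by ring
    simpa only [betaOrder_mul_succ_add htm hi1 hi2] using
      key (m * (k + 1) + i) (by simp only [mem_Icc]; omega)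
  · simpa only [betaOrder_of_lt hi1] using key i (by simp only [mem_Icc]; omega)

/-- the ranks of the constructed composition `β`. -/
theorem beta_ranks (N : ℕ) (α β : ℕ → ℕ) (w : ℕ → ℕ) (m n T t k : ℕ) (ξ : ℕ → ℚ)
    (hN : 1 ≤ N)
    (hNfull : N = len N α + wt N α)
    (hsupp : ∀ i, N < i → α i = 0)
    (hw : ∀ i, 1 ≤ i → 1 ≤ w i ∧ rnk N α (w i) = i)
    (hn1 : 1 ≤ n) (hn2 : n ≤ α (w 1))
    (hm : leg N α (w 1) (α (w 1) + 1 - n) + 1 = m)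
    (hξ : ∀ k i, 1 ≤ i → i ≤ m → ξ (m * k + i) = tilde N α (w i) - (n : ℚ) * k)
    (hT1 : 1 ≤ T)
    (hT2 : ∀ s, 1 ≤ s → s < T → tilde N α (w (m + s)) < ξ (m + s + 1))
    (hT3 : ξ (m + T + 1) < tilde N α (w (m + T)))
    (ht : t = (T - 1) % m + 1) (hk : k = (T - t) / m)
    (hβ : ∀ i, 1 ≤ i →
      (i ≤ t → (β (w i) : ℤ) = (α (w i) : ℤ) - (k + 1) * n) ∧
      (t < i → i ≤ m → (β (w i) : ℤ) = (α (w i) : ℤ) - k * n) ∧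
      (m < i → i ≤ m + T → β (w i) = α (w i) + n) ∧
      (m + T < i → β (w i) = α (w i))) :
    (∀ i, 1 ≤ i → i ≤ T → rnk N β (w (m + i)) = i) ∧
    (∀ i, 1 ≤ i → i ≤ m - t → rnk N β (w (t + i)) = m * k + t + i) ∧
    (∀ i, 1 ≤ i → i ≤ t → rnk N β (w i) = m * (k + 1) + i) ∧
    (∀ i, m + T < i → i ≤ N → rnk N β (w i) = i) :=
  beta_ranks_general N α β w m n T t k ξ hNfull hsupp hw hn1 hn2 hm hξ hT1 hT2 hT3 ht hk hβ
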